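/- arXiv:1908.08901 — 4 statements merged into one kernel-verified Lean document; each statement's English description precedes it below -/
import Mathlib

section
/- Let D ⊂ ℝ² be a bounded measurable set and let T_1, …, T_N be pairwise disjoint measurable subsets of D whose union equals D up to a Lebesgue-null set, such that each T_i is (up to a null set) the convex hull of three affinely independent points whose pairwise Euclidean distances are at most h ∈ (0,1], so in particular 0 < |T_i| < ∞. Let Z_1, …, Z_N be an independent family of random variables with Z_i uniformly distributed on T_i. Then for every v ∈ L²(D) it holds that E[|∫_D v(x) dx − ∑_{i=1}^N |T_i| v(Z_i)|²] ≤ (√3/2) h² ‖v‖²_{L²(D)}. -/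
/-!
The estimator `∑ i, |T i| v (Z i)` is unbiased and its strata are sampled independently, so its
mean-square error is its variance, which splits into the variances of the summands; the `i`-th one
is at most `|T i|² E[v (Z i)²] = |T i| ∫_{T i} v²`. A triangle with two sides of length at most
`h` has area at most `h² / 2 ≤ (√3 / 2) h²`, and summing over the strata gives the bound.
-/

open MeasureTheory ProbabilityTheory Set
open scoped ENNReal

def stdTriangle : Set (Fin 2 → ℝ) := {x | 0 ≤ x 0 ∧ 0 ≤ x 1 ∧ x 0 + x 1 ≤ 1}

lemma measurableSet_stdTriangle : MeasurableSet stdTriangle :=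
  (measurableSet_le measurable_const (measurable_pi_apply 0)).inter <|
    (measurableSet_le measurable_const (measurable_pi_apply 1)).inter <|
      measurableSet_le ((measurable_pi_apply 0).add (measurable_pi_apply 1)) measurable_const

lemma convex_stdTriangle : Convex ℝ stdTriangle := by
  rintro x ⟨hx0, hx1, hx⟩ y ⟨hy0, hy1, hy⟩ a b ha hb hab
  refine ⟨?_, ?_, ?_⟩ <;> simp only [Pi.add_apply, Pi.smul_apply, smul_eq_mul] <;> nlinarith

lemma volume_setOf_add_eq_one : volume {x : Fin 2 → ℝ | x 0 + x 1 = 1} = 0 := by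
  let φ : (Fin 2 → ℝ) →ₗ[ℝ] ℝ := LinearMap.proj (R := ℝ) (φ := fun _ : Fin 2 => ℝ) 0 +
    LinearMap.proj (R := ℝ) (φ := fun _ : Fin 2 => ℝ) 1
  have hmem (x : Fin 2 → ℝ) :
      x ∈ AffineSubspace.mk' (Pi.single 0 1 : Fin 2 → ℝ) (LinearMap.ker φ) ↔ x 0 + x 1 = 1 := by
    simp only [φ, AffineSubspace.mem_mk', vsub_eq_sub, LinearMap.mem_ker, LinearMap.add_apply,
      LinearMap.coe_proj, Function.eval, Pi.sub_apply, Pi.single_eq_same, ne_eq, one_ne_zero,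
      not_false_eq_true, Pi.single_eq_of_ne, sub_zero]
    rw [sub_add_eq_add_sub, sub_eq_zero]
  have hline : {x : Fin 2 → ℝ | x 0 + x 1 = 1} =
      AffineSubspace.mk' (Pi.single 0 1 : Fin 2 → ℝ) (LinearMap.ker φ) := by
    ext x; exact (hmem x).symm
  rw [hline]
  refine Measure.addHaar_affineSubspace _ _ fun htop => ?_
  have := (hmem 0).1 (htop ▸ AffineSubspace.mem_top ℝ _ 0)
  norm_num at this

/-- The reflection `x ↦ 1 - x` maps the triangle onto the complementary half of the unit
square; the two halves overlap only on the diagonal `x 0 + x 1 = 1`. -/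
lemma volume_stdTriangle_le : volume stdTriangle ≤ ENNReal.ofReal 2⁻¹ := by
  set Δ' := (fun x => 1 - x) ⁻¹' stdTriangle
  have hΔ' : MeasurableSet Δ' := measurableSet_stdTriangle.preimage (by fun_prop)
  have hvol : volume Δ' = volume stdTriangle :=
    (Measure.measurePreserving_sub_left volume 1).measure_preimage
      measurableSet_stdTriangle.nullMeasurableSet
  have hunion : stdTriangle ∪ Δ' ⊆ Icc 0 1 := by
    rintro x (⟨h0, h1, h⟩ | ⟨h0, h1, h⟩) <;>
      simp only [Δ', Pi.sub_apply, Pi.one_apply] at * <;>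
      refine ⟨fun i => ?_, fun i => ?_⟩ <;> fin_cases i <;> simp <;> linarith
  have hinter : stdTriangle ∩ Δ' ⊆ {x | x 0 + x 1 = 1} := by
    rintro x ⟨⟨-, -, h⟩, ⟨-, -, h'⟩⟩
    simp only [Pi.sub_apply, Pi.one_apply] at h'
    exact le_antisymm h (by linarith)
  have : volume stdTriangle + volume stdTriangle ≤ 1 := calc
    _ = volume (stdTriangle ∪ Δ') + volume (stdTriangle ∩ Δ') := by
      rw [measure_union_add_inter _ hΔ', hvol]
    _ ≤ volume (Icc (0 : Fin 2 → ℝ) 1) + volume {x : Fin 2 → ℝ | x 0 + x 1 = 1} :=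
      add_le_add (measure_mono hunion) (measure_mono hinter)
    _ = 1 := by simp [Real.volume_Icc_pi, volume_setOf_add_eq_one]
  rw [← one_div, ENNReal.ofReal_div_of_pos two_pos, ENNReal.ofReal_one, ENNReal.ofReal_ofNat,
    ENNReal.le_div_iff_mul_le (by norm_num) (by norm_num), mul_two]
  exact this

lemma convexHull_triangle_subset_image_stdTriangle (A B C : Fin 2 → ℝ) :
    convexHull ℝ {A, B, C} ⊆ (A + ·) ''
      (Matrix.toLin' !![B 0 - A 0, C 0 - A 0; B 1 - A 1, C 1 - A 1] '' stdTriangle) := by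
  set L := Matrix.toLin' !![B 0 - A 0, C 0 - A 0; B 1 - A 1, C 1 - A 1]
  have hL (x : Fin 2 → ℝ) : L x = x 0 • (B - A) + x 1 • (C - A) := by
    ext i; fin_cases i <;> simp [L, Matrix.mulVec, dotProduct] <;> ring
  refine convexHull_min ?_ ((convex_stdTriangle.linear_image L).translate A)
  simp only [insert_subset_iff, singleton_subset_iff]
  refine ⟨?_, ?_, ?_⟩
  · exact ⟨0, ⟨0, by simp [stdTriangle], by simp⟩, by simp⟩
  · exact ⟨B - A, ⟨Pi.single 0 1, by simp [stdTriangle], by simp [hL]⟩, by simp⟩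
  · exact ⟨C - A, ⟨Pi.single 1 1, by simp [stdTriangle], by simp [hL]⟩, by simp⟩

lemma volume_convexHull_triangle_le (A B C : Fin 2 → ℝ) :
    volume (convexHull ℝ {A, B, C}) ≤
      ENNReal.ofReal (|(B 0 - A 0) * (C 1 - A 1) - (C 0 - A 0) * (B 1 - A 1)| / 2) := by
  refine (measure_mono (convexHull_triangle_subset_image_stdTriangle A B C)).trans ?_
  rw [image_add_left, measure_preimage_add, Measure.addHaar_image_linearMap,
    LinearMap.det_toLin', Matrix.det_fin_two_of, div_eq_mul_inv,
    ENNReal.ofReal_mul (abs_nonneg _)]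
  exact mul_le_mul_right volume_stdTriangle_le _

lemma abs_cross_le_sqrt_mul_sqrt (u₀ u₁ w₀ w₁ : ℝ) :
    |u₀ * w₁ - w₀ * u₁| ≤ √(u₀ ^ 2 + u₁ ^ 2) * √(w₀ ^ 2 + w₁ ^ 2) := by
  rw [← Real.sqrt_mul (by positivity)]
  exact Real.abs_le_sqrt (by nlinarith [sq_nonneg (u₀ * w₀ + u₁ * w₁)])

lemma EuclideanSpace.volume_convexHull_triangle_le (A B C : EuclideanSpace ℝ (Fin 2)) :
    volume (convexHull ℝ {A, B, C}) ≤ ENNReal.ofReal (dist A B * dist A C / 2) := by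
  have himage : WithLp.ofLp '' convexHull ℝ {A, B, C} =
      convexHull ℝ {A.ofLp, B.ofLp, C.ofLp} := by
    simpa [image_insert_eq] using
      (WithLp.linearEquiv 2 ℝ (Fin 2 → ℝ)).toLinearMap.image_convexHull {A, B, C}
  have hmeas : MeasurableSet (convexHull ℝ {A.ofLp, B.ofLp, C.ofLp}) :=
    (toFinite _).isCompact_convexHull (𝕜 := ℝ) |>.isClosed.measurableSet
  rw [← (WithLp.ofLp_injective 2).preimage_image (convexHull ℝ {A, B, C}), himage,
    (PiLp.volume_preserving_ofLp (ι := Fin 2)).measure_preimage hmeas.nullMeasurableSet]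
  refine (_root_.volume_convexHull_triangle_le _ _ _).trans (ENNReal.ofReal_le_ofReal ?_)
  gcongr
  simpa only [dist_comm A, EuclideanSpace.dist_eq, Fin.sum_univ_two, Real.dist_eq, sq_abs] using
    abs_cross_le_sqrt_mul_sqrt (B 0 - A 0) (B 1 - A 1) (C 0 - A 0) (C 1 - A 1)

namespace MeasureTheory.pdf.IsUniform

variable {α Ω E : Type*} [MeasurableSpace α] [MeasurableSpace Ω] [NormedAddCommGroup E]
  {μ : Measure α} {P : Measure Ω} {X : Ω → α} {s : Set α} {f : α → E}

lemma aestronglyMeasurable_map (hu : IsUniform X s P μ)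
    (hf : AEStronglyMeasurable f (μ.restrict s)) : AEStronglyMeasurable f (P.map X) := by
  rw [hu]
  exact hf.smul_measure _

lemma memLp_comp {p : ℝ≥0∞} (hu : IsUniform X s P μ) (hX : AEMeasurable X P) (hs : μ s ≠ 0)
    (hf : MemLp f p (μ.restrict s)) : MemLp (fun ω => f (X ω)) p P := by
  refine (memLp_map_measure_iff (hu.aestronglyMeasurable_map hf.1) hX).1 ?_
  rw [hu]
  exact hf.smul_measure (ENNReal.inv_ne_top.2 hs)

lemma integral_comp [NormedSpace ℝ E] (hu : IsUniform X s P μ) (hX : AEMeasurable X P)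
    (hf : AEStronglyMeasurable f (μ.restrict s)) :
    ∫ ω, f (X ω) ∂P = (μ s).toReal⁻¹ • ∫ x in s, f x ∂μ := by
  rw [← integral_map hX (hu.aestronglyMeasurable_map hf), hu, ProbabilityTheory.cond,
    integral_smul_measure, ENNReal.toReal_inv]

end MeasureTheory.pdf.IsUniform

section StratifiedSampling

variable {α Ω ι : Type*} [MeasurableSpace α] [MeasurableSpace Ω] [Fintype ι]
  {μ : Measure α} {P : Measure Ω}

lemma integral_eq_sum_of_ae_cover {E : Type*} [NormedAddCommGroup E] [NormedSpace ℝ E]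
    {D : Set α} {T : ι → Set α} (hTmeas : ∀ i, MeasurableSet (T i)) (hTsub : ∀ i, T i ⊆ D)
    (hTdisj : Pairwise (Function.onFun Disjoint T)) (hcover : μ (D \ ⋃ i, T i) = 0)
    {g : α → E} (hg : ∀ i, IntegrableOn g (T i) μ) :
    ∫ x in D, g x ∂μ = ∑ i, ∫ x in T i, g x ∂μ := by
  have hD : D =ᵐ[μ] ⋃ i, T i :=
    ae_eq_set.2 ⟨hcover, by rw [sdiff_eq_empty.2 (iUnion_subset hTsub), measure_empty]⟩
  rw [Measure.restrict_congr_set hD,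
    integral_iUnion hTmeas hTdisj (integrableOn_finite_iUnion.2 hg), tsum_fintype]

theorem integral_sq_stratified_error_le [IsProbabilityMeasure P] {T : ι → Set α}
    (hT0 : ∀ i, μ (T i) ≠ 0) (hTtop : ∀ i, μ (T i) ≠ ∞) {X : ι → Ω → α}
    (hX : ∀ i, AEMeasurable (X i) P) (hu : ∀ i, pdf.IsUniform (X i) (T i) P μ)
    (hind : iIndepFun X P) {f : α → ℝ} (hf : ∀ i, MemLp f 2 (μ.restrict (T i))) :
    ∫ ω, (∑ i, ∫ x in T i, f x ∂μ - ∑ i, (μ (T i)).toReal * f (X i ω)) ^ 2 ∂P ≤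
      ∑ i, (μ (T i)).toReal * ∫ x in T i, f x ^ 2 ∂μ := by
  set a : ι → ℝ := fun i => (μ (T i)).toReal
  have ha : ∀ i, a i ≠ 0 := fun i => ENNReal.toReal_ne_zero.2 ⟨hT0 i, hTtop i⟩
  set Y : ι → Ω → ℝ := fun i ω => a i * f (X i ω)
  have hY : ∀ i, MemLp (Y i) 2 P := fun i =>
    ((hu i).memLp_comp (hX i) (hT0 i) (hf i)).const_mul _
  have hmean : ∀ i, P[Y i] = ∫ x in T i, f x ∂μ := fun i => by
    rw [integral_const_mul, (hu i).integral_comp (hX i) (hf i).1, smul_eq_mul,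
      mul_inv_cancel_left₀ (ha i)]
  have hmoment : ∀ i, P[Y i ^ 2] = a i * ∫ x in T i, f x ^ 2 ∂μ := fun i => by
    simp only [Y, Pi.pow_apply, mul_pow]
    rw [integral_const_mul, (hu i).integral_comp (f := fun x => f x ^ 2) (hX i) ((hf i).1.pow 2),
      smul_eq_mul, sq, mul_assoc, mul_inv_cancel_left₀ (ha i)]
  have hindY : Set.Pairwise (Finset.univ : Finset ι) fun i j => IndepFun (Y i) (Y j) P :=
    fun i _ j _ hij => (hind.indepFun hij).comp₀ (hX i) (hX j)
      ((hu i).aestronglyMeasurable_map ((hf i).1.const_mul _)).aemeasurable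
      ((hu j).aestronglyMeasurable_map ((hf j).1.const_mul _)).aemeasurable
  have hsum : P[∑ i, Y i] = ∑ i, ∫ x in T i, f x ∂μ := by
    simp only [Finset.sum_apply]
    rw [integral_finsetSum _ fun i _ => (hY i).integrable one_le_two]
    exact Finset.sum_congr rfl fun i _ => hmean i
  calc _ = Var[∑ i, Y i; P] := by
        rw [variance_eq_integral (memLp_finsetSum' _ fun i _ => hY i).aemeasurable, hsum]
        congr 1 with ω
        simp only [Finset.sum_apply, Y, a]
        ring
    _ = ∑ i, Var[Y i; P] := IndepFun.variance_sum (fun i _ => hY i) hindY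
    _ ≤ ∑ i, P[Y i ^ 2] :=
        Finset.sum_le_sum fun i _ => variance_le_expectation_sq (hY i).aestronglyMeasurable
    _ = _ := Finset.sum_congr rfl fun i _ => hmoment i

end StratifiedSampling

theorem stmt_4_general
    {Ω : Type*} [MeasurableSpace Ω] (P : Measure Ω) [IsProbabilityMeasure P]
    (D : Set (EuclideanSpace ℝ (Fin 2)))
    (h : ℝ)
    (N : ℕ) (T : Fin N → Set (EuclideanSpace ℝ (Fin 2)))
    (hTmeas : ∀ i, MeasurableSet (T i))
    (hTsub : ∀ i, T i ⊆ D)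
    (hTdisj : Pairwise (Function.onFun Disjoint T))
    (hTtri : ∀ i, ∃ A B C : EuclideanSpace ℝ (Fin 2),
      AffineIndependent ℝ ![A, B, C] ∧
      dist A B ≤ h ∧ dist A C ≤ h ∧ dist B C ≤ h ∧
      volume (symmDiff (T i) (convexHull ℝ {A, B, C})) = 0)
    (hTpos : ∀ i, 0 < volume (T i))
    (hTfin : ∀ i, volume (T i) < ⊤)
    (hcover : volume (D \ ⋃ i, T i) = 0)
    (Z : Fin N → Ω → EuclideanSpace ℝ (Fin 2))
    (hZmeas : ∀ i, Measurable (Z i))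
    (hZlaw : ∀ i, Measure.map (Z i) P = (volume (T i))⁻¹ • volume.restrict (T i))
    (hZindep : iIndepFun Z P)
    (v : EuclideanSpace ℝ (Fin 2) → ℝ)
    (hv : MemLp v 2 (volume.restrict D)) :
    ∫ ω, |(∫ x in D, v x) - ∑ i, (volume (T i)).toReal * v (Z i ω)| ^ 2 ∂P
      ≤ Real.sqrt 3 / 2 * h ^ 2 * ∫ x in D, |v x| ^ 2 := by
  have hvT (i : Fin N) : MemLp v 2 (volume.restrict (T i)) :=
    hv.mono_measure (Measure.restrict_mono (hTsub i) le_rfl)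
  have (i : Fin N) : IsFiniteMeasure (volume.restrict (T i)) :=
    isFiniteMeasure_restrict.2 (hTfin i).ne
  have harea (i : Fin N) : (volume (T i)).toReal ≤ √3 / 2 * h ^ 2 := by
    obtain ⟨A, B, C, -, hAB, hAC, -, hT⟩ := hTtri i
    have hle := (measure_congr (measure_symmDiff_eq_zero_iff.1 hT)).trans_le
      (EuclideanSpace.volume_convexHull_triangle_le A B C)
    calc (volume (T i)).toReal ≤ dist A B * dist A C / 2 :=
          ENNReal.toReal_le_of_le_ofReal (by positivity) hle
      _ ≤ h ^ 2 / 2 := by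
          rw [sq]
          gcongr
          exact dist_nonneg.trans hAB
      _ ≤ √3 / 2 * h ^ 2 := by
          nlinarith [Real.one_le_sqrt.2 (by norm_num : (1 : ℝ) ≤ 3), sq_nonneg h]
  simp only [sq_abs]
  rw [integral_eq_sum_of_ae_cover hTmeas hTsub hTdisj hcover fun i => (hvT i).integrable one_le_two,
    integral_eq_sum_of_ae_cover hTmeas hTsub hTdisj hcover fun i => (hvT i).integrable_sq]
  calc _ ≤ ∑ i, (volume (T i)).toReal * ∫ x in T i, v x ^ 2 :=
        integral_sq_stratified_error_le (fun i => (hTpos i).ne') (fun i => (hTfin i).ne)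
          (fun i => (hZmeas i).aemeasurable) hZlaw hZindep hvT
    _ ≤ ∑ i, √3 / 2 * h ^ 2 * ∫ x in T i, v x ^ 2 :=
        Finset.sum_le_sum fun i _ =>
          mul_le_mul_of_nonneg_right (harea i) (integral_nonneg fun _ => sq_nonneg _)
    _ = _ := (Finset.mul_sum _ _ _).symm

/-- Mean-square error bound for the stratified Monte Carlo quadrature rule on a
triangulation with maximal edge length `h`:
`E[|∫_D v − ∑ i |T i| v (Z i)|²] ≤ (√3/2) h² ‖v‖²_{L²(D)}`. -/
theorem stmt_4
    {Ω : Type*} [MeasurableSpace Ω] (P : Measure Ω) [IsProbabilityMeasure P]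
    (D : Set (EuclideanSpace ℝ (Fin 2))) (hDmeas : MeasurableSet D)
    (hDbdd : Bornology.IsBounded D)
    (h : ℝ) (hh0 : 0 < h) (hh1 : h ≤ 1)
    (N : ℕ) (T : Fin N → Set (EuclideanSpace ℝ (Fin 2)))
    (hTmeas : ∀ i, MeasurableSet (T i))
    (hTsub : ∀ i, T i ⊆ D)
    (hTdisj : Pairwise (Function.onFun Disjoint T))
    (hTtri : ∀ i, ∃ A B C : EuclideanSpace ℝ (Fin 2),
      AffineIndependent ℝ ![A, B, C] ∧
      dist A B ≤ h ∧ dist A C ≤ h ∧ dist B C ≤ h ∧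
      volume (symmDiff (T i) (convexHull ℝ {A, B, C})) = 0)
    (hTpos : ∀ i, 0 < volume (T i))
    (hTfin : ∀ i, volume (T i) < ⊤)
    (hcover : volume (D \ ⋃ i, T i) = 0)
    (Z : Fin N → Ω → EuclideanSpace ℝ (Fin 2))
    (hZmeas : ∀ i, Measurable (Z i))
    (hZlaw : ∀ i, Measure.map (Z i) P = (volume (T i))⁻¹ • volume.restrict (T i))
    (hZindep : iIndepFun Z P)
    (v : EuclideanSpace ℝ (Fin 2) → ℝ)
    (hv : MemLp v 2 (volume.restrict D)) :
    ∫ ω, |(∫ x in D, v x) - ∑ i, (volume (T i)).toReal * v (Z i ω)| ^ 2 ∂P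
      ≤ Real.sqrt 3 / 2 * h ^ 2 * ∫ x in D, |v x| ^ 2 :=
  stmt_4_general P D h N T hTmeas hTsub hTdisj hTtri hTpos hTfin hcover Z hZmeas hZlaw hZindep v hv
end

section
/- Let A, B, C ∈ ℝ² be affinely independent points with pairwise Euclidean distances at most h > 0, let T be the convex hull of {A, B, C}, and let φ : ℝ² → ℝ be the affine function with φ(A) = 1 and φ(B) = φ(C) = 0. Let Y be a random variable whose law has density p(x) = 3|T|^{-1} φ(x) 𝟙_T(x) with respect to Lebesgue measure. Then for every s ∈ (0,1) and every measurable f : T → ℝ with f²·φ ∈ L¹(T) it holds that E[|∫_T f(x)φ(x) dx − (|T|/3) f(Y)|²] ≤ h^{2+2s} ∫_T ∫_T |f(x) − f(z)|² / |x − z|^{2+2s} dx dz. -/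
/-!
Since `∫_T φ = |T|/3`, the error at a sample point `y` is `∫_T (f x - f y) φ(x) dx`, so by
Cauchy–Schwarz with weight `φ` its square is at most `(|T|/3) ∫_T |f x - f y|² φ(x) dx`.
Averaging over `y` with density `3 |T|⁻¹ φ` cancels the factor `|T|/3`; then `φ ≤ 1` on `T`
and `|x - y| ≤ h` on `T` (the diameter of a triangle is its longest edge) give the bound.
-/

open MeasureTheory
open scoped ENNReal

theorem AffineMap.mapsTo_convexHull {E F : Type*} [AddCommGroup E] [Module ℝ E]
    [AddCommGroup F] [Module ℝ F] (φ : E →ᵃ[ℝ] F) {s : Set E} {t : Set F} (ht : Convex ℝ t)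
    (hst : Set.MapsTo φ s t) : Set.MapsTo φ (convexHull ℝ s) t :=
  convexHull_min hst (ht.affine_preimage φ)

theorem dist_le_of_mem_convexHull_triple {E : Type*} [SeminormedAddCommGroup E]
    [NormedSpace ℝ E] {A B C x z : E} {h : ℝ} (hAB : dist A B ≤ h) (hAC : dist A C ≤ h)
    (hBC : dist B C ≤ h) (hx : x ∈ convexHull ℝ {A, B, C})
    (hz : z ∈ convexHull ℝ {A, B, C}) : dist x z ≤ h := by
  have hbdd : Bornology.IsBounded (convexHull ℝ {A, B, C}) :=
    ((Set.toFinite {A, B, C}).isCompact_convexHull ℝ).isBounded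
  calc dist x z ≤ Metric.diam (convexHull ℝ {A, B, C}) := Metric.dist_le_diam_of_mem hbdd hx hz
    _ ≤ h := by rw [convexHull_diam, Metric.diam_triple]; exact max_le (max_le hAB hAC) hBC

theorem enorm_sub_sq_le_rpow_mul {X : Type*} [MetricSpace X] (f : X → ℝ) {x z : X} {h e : ℝ}
    (he : 0 ≤ e) (hxz : dist x z ≤ h) :
    ‖f x - f z‖ₑ ^ 2
      ≤ ENNReal.ofReal (h ^ e) * ENNReal.ofReal (|f x - f z| ^ 2 / dist x z ^ e) := by
  rcases eq_or_ne x z with rfl | hne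
  · simp
  have hd : 0 < dist x z ^ e := Real.rpow_pos_of_pos (dist_pos.2 hne) e
  calc ‖f x - f z‖ₑ ^ 2
      = ENNReal.ofReal (dist x z ^ e * (|f x - f z| ^ 2 / dist x z ^ e)) := by
        rw [mul_div_cancel₀ _ hd.ne', ENNReal.ofReal_pow (abs_nonneg _),
          Real.enorm_eq_ofReal_abs]
    _ ≤ ENNReal.ofReal (h ^ e * (|f x - f z| ^ 2 / dist x z ^ e)) := by gcongr
    _ = _ := ENNReal.ofReal_mul (Real.rpow_nonneg (dist_nonneg.trans hxz) e)

section Integrals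

variable {α : Type*} [MeasurableSpace α] {μ : Measure α}

theorem ENNReal.lintegral_mul_sq_le {f w : α → ℝ≥0∞} (hf : AEMeasurable f μ)
    (hw : AEMeasurable w μ) :
    (∫⁻ x, f x * w x ∂μ) ^ 2 ≤ (∫⁻ x, w x ∂μ) * ∫⁻ x, f x ^ 2 * w x ∂μ := by
  have holder := ENNReal.lintegral_mul_le_Lp_mul_Lq (μ.withDensity w)
    Real.HolderConjugate.two_two (hf.mono' (withDensity_absolutelyContinuous μ w))
    aemeasurable_const (g := 1)
  simp only [Pi.mul_apply, Pi.one_apply, mul_one, lintegral_const, ENNReal.rpow_two,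
    one_pow, one_mul] at holder
  rw [lintegral_withDensity_eq_lintegral_mul₀ hw hf,
    lintegral_withDensity_eq_lintegral_mul₀ hw (hf.pow_const 2),
    withDensity_apply _ MeasurableSet.univ, Measure.restrict_univ] at holder
  calc (∫⁻ x, f x * w x ∂μ) ^ 2
      ≤ ((∫⁻ x, f x ^ 2 * w x ∂μ) ^ (1 / 2 : ℝ) * (∫⁻ x, w x ∂μ) ^ (1 / 2 : ℝ)) ^ 2 := by
        simpa only [Pi.mul_apply, mul_comm (w _)] using pow_le_pow_left' holder 2
    _ = _ := by
        rw [mul_pow, ← ENNReal.rpow_natCast, ← ENNReal.rpow_natCast, ← ENNReal.rpow_mul,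
          ← ENNReal.rpow_mul]
        norm_num [mul_comm]

theorem enorm_integral_mul_sub_sq_le {f w : α → ℝ} (hf : AEMeasurable f μ)
    (hw : Integrable w μ) (hw0 : 0 ≤ᵐ[μ] w) (hfw : Integrable (fun x => f x * w x) μ) (a : ℝ) :
    ‖(∫ x, f x * w x ∂μ) - (∫ x, w x ∂μ) * a‖ₑ ^ 2
      ≤ ENNReal.ofReal (∫ x, w x ∂μ) * ∫⁻ x, ‖f x - a‖ₑ ^ 2 * ENNReal.ofReal (w x) ∂μ := by
  have hker : (∫ x, f x * w x ∂μ) - (∫ x, w x ∂μ) * a = ∫ x, (f x - a) * w x ∂μ := by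
    simp only [sub_mul]
    rw [integral_sub hfw (hw.const_mul a), integral_const_mul, mul_comm]
  have habs : ‖∫ x, (f x - a) * w x ∂μ‖ₑ ≤ ∫⁻ x, ‖f x - a‖ₑ * ENNReal.ofReal (w x) ∂μ :=
    (enorm_integral_le_lintegral_enorm _).trans_eq <| lintegral_congr_ae <|
      hw0.mono fun x (hx : 0 ≤ w x) => by simp only [enorm_mul, Real.enorm_of_nonneg hx]
  rw [hker, ofReal_integral_eq_lintegral_ofReal hw hw0]
  exact (pow_le_pow_left' habs 2).trans
    (ENNReal.lintegral_mul_sq_le (by fun_prop) hw.1.aemeasurable.ennreal_ofReal)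

theorem Integrable.mul_of_integrable_sq_mul {f w : α → ℝ} (hf : AEStronglyMeasurable f μ)
    (hw : Integrable w μ) (hw0 : 0 ≤ᵐ[μ] w) (hfw : Integrable (fun x => f x ^ 2 * w x) μ) :
    Integrable (fun x => f x * w x) μ := by
  refine ((hfw.add hw).div_const 2).mono' (hf.mul hw.1) (hw0.mono fun x (hx : 0 ≤ w x) => ?_)
  simp only [Pi.add_apply, norm_mul, Real.norm_eq_abs, Real.norm_of_nonneg hx]
  nlinarith [mul_nonneg hx (sq_nonneg (|f x| - 1)), sq_abs (f x)]

end Integrals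

section Sampling

variable {Ω E : Type*} [MeasurableSpace Ω] [MeasurableSpace E] {P : Measure Ω} {μ : Measure E}
  {Y : Ω → E} {T : Set E} {c : ℝ} {w : E → ℝ}

theorem lintegral_comp_eq_of_map_eq_withDensity_indicator (hT : MeasurableSet T) (hc : 0 ≤ c)
    (hw : Measurable w) (hY : Measurable Y)
    (hlaw : P.map Y = μ.withDensity fun x => ENNReal.ofReal (T.indicator (fun x => c * w x) x))
    {g : E → ℝ≥0∞} (hg : Measurable g) :
    ∫⁻ ω, g (Y ω) ∂P = ENNReal.ofReal c * ∫⁻ y in T, ENNReal.ofReal (w y) * g y ∂μ := by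
  rw [← lintegral_map hg hY, hlaw, lintegral_withDensity_eq_lintegral_mul _
    ((hw.const_mul c).indicator hT).ennreal_ofReal hg, ← lintegral_indicator hT,
    ← lintegral_const_mul' _ _ ENNReal.ofReal_ne_top]
  refine lintegral_congr fun x => ?_
  by_cases hx : x ∈ T <;> simp [hx, ENNReal.ofReal_mul hc, mul_assoc]

theorem mul_setIntegral_eq_one_of_map_eq_withDensity_indicator [IsProbabilityMeasure P]
    (hT : MeasurableSet T) (hc : 0 ≤ c) (hw : Measurable w) (hw0 : ∀ x ∈ T, 0 ≤ w x)
    (hwint : IntegrableOn w T μ) (hY : Measurable Y)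
    (hlaw : P.map Y = μ.withDensity fun x => ENNReal.ofReal (T.indicator (fun x => c * w x) x)) :
    c * ∫ x in T, w x ∂μ = 1 := by
  have hmass := lintegral_comp_eq_of_map_eq_withDensity_indicator hT hc hw hY hlaw
    (measurable_const (a := 1))
  simp only [mul_one, lintegral_const, measure_univ] at hmass
  rw [← ofReal_integral_eq_lintegral_ofReal hwint
    (ae_restrict_of_forall_mem hT hw0)] at hmass
  simpa [← ENNReal.ofReal_mul hc] using hmass.symm

theorem ofReal_integral_sq_sub_le_of_map_eq_withDensity_indicator [IsProbabilityMeasure P]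
    (hT : MeasurableSet T) (hc : 0 ≤ c) (hw : Measurable w) (hw0 : ∀ x ∈ T, 0 ≤ w x)
    (hwint : IntegrableOn w T μ) (hY : Measurable Y)
    (hlaw : P.map Y = μ.withDensity fun x => ENNReal.ofReal (T.indicator (fun x => c * w x) x))
    {f : E → ℝ} (hf : Measurable f) (hfw : IntegrableOn (fun x => f x * w x) T μ) :
    ENNReal.ofReal
        (∫ ω, |(∫ x in T, f x * w x ∂μ) - (∫ x in T, w x ∂μ) * f (Y ω)| ^ 2 ∂P)
      ≤ ∫⁻ y in T, ENNReal.ofReal (w y)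
          * ∫⁻ x in T, ‖f x - f y‖ₑ ^ 2 * ENNReal.ofReal (w x) ∂μ ∂μ := by
  set m := ∫ x in T, w x ∂μ
  set I := ∫ x in T, f x * w x ∂μ
  have hmass : ENNReal.ofReal c * ENNReal.ofReal m = 1 := by
    rw [← ENNReal.ofReal_mul hc,
      mul_setIntegral_eq_one_of_map_eq_withDensity_indicator hT hc hw hw0 hwint hY hlaw,
      ENNReal.ofReal_one]
  calc ENNReal.ofReal (∫ ω, |I - m * f (Y ω)| ^ 2 ∂P)
      ≤ ∫⁻ ω, ‖I - m * f (Y ω)‖ₑ ^ 2 ∂P := by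
        refine (Real.ofReal_le_enorm _).trans ((enorm_integral_le_lintegral_enorm _).trans_eq ?_)
        simp [enorm_pow]
    _ = ENNReal.ofReal c * ∫⁻ y in T, ENNReal.ofReal (w y) * ‖I - m * f y‖ₑ ^ 2 ∂μ :=
        lintegral_comp_eq_of_map_eq_withDensity_indicator hT hc hw hY hlaw
          (g := fun y => ‖I - m * f y‖ₑ ^ 2) (by fun_prop)
    _ ≤ ENNReal.ofReal c * ∫⁻ y in T, ENNReal.ofReal (w y)
          * (ENNReal.ofReal m * ∫⁻ x in T, ‖f x - f y‖ₑ ^ 2 * ENNReal.ofReal (w x) ∂μ) ∂μ := by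
        gcongr with y
        exact enorm_integral_mul_sub_sq_le hf.aemeasurable hwint
          (ae_restrict_of_forall_mem hT hw0) hfw (f y)
    _ = _ := by
        simp_rw [mul_left_comm _ (ENNReal.ofReal m)]
        rw [lintegral_const_mul' _ _ ENNReal.ofReal_ne_top, ← mul_assoc, hmass, one_mul]

end Sampling

theorem stmt_10_general
    {Ω : Type*} [MeasurableSpace Ω] (P : Measure Ω) [IsProbabilityMeasure P]
    (h : ℝ)
    (A B C : EuclideanSpace ℝ (Fin 2))
    (hAB : dist A B ≤ h) (hAC : dist A C ≤ h) (hBC : dist B C ≤ h)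
    (T : Set (EuclideanSpace ℝ (Fin 2))) (hT : T = convexHull ℝ {A, B, C})
    (φ : EuclideanSpace ℝ (Fin 2) →ᵃ[ℝ] ℝ)
    (hA : φ A = 1) (hB : φ B = 0) (hC : φ C = 0)
    (Y : Ω → EuclideanSpace ℝ (Fin 2)) (hYmeas : Measurable Y)
    (hYlaw : Measure.map Y P = volume.withDensity
      (fun x => ENNReal.ofReal
        (T.indicator (fun x => 3 * (volume T).toReal⁻¹ * φ x) x)))
    (s : ℝ) (hs0 : 0 < s)
    (f : EuclideanSpace ℝ (Fin 2) → ℝ) (hfmeas : Measurable f)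
    (hfint : IntegrableOn (fun x => f x ^ 2 * φ x) T) :
    ENNReal.ofReal
        (∫ ω, |(∫ x in T, f x * φ x) - (volume T).toReal / 3 * f (Y ω)| ^ 2 ∂P)
      ≤ ENNReal.ofReal (h ^ (2 + 2 * s))
          * ∫⁻ x in T, ∫⁻ z in T,
              ENNReal.ofReal (|f x - f z| ^ 2 / dist x z ^ (2 + 2 * s)) := by
  have hTc : IsCompact T := hT ▸ (Set.toFinite _).isCompact_convexHull ℝ
  have hTm : MeasurableSet T := hTc.measurableSet
  have hφT : Set.MapsTo φ T (Set.Icc 0 1) := hT ▸ φ.mapsTo_convexHull (convex_Icc 0 1) (by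
    rintro x (rfl | rfl | rfl) <;> simp [hA, hB, hC])
  have hφ1 : ∀ x ∈ T, ENNReal.ofReal (φ x) ≤ 1 := fun x hx => ENNReal.ofReal_le_one.2 (hφT hx).2
  have hdiam : ∀ x ∈ T, ∀ z ∈ T, dist x z ≤ h := by
    subst hT
    exact fun x hx z hz => dist_le_of_mem_convexHull_triple hAB hAC hBC hx hz
  have hφcont : Continuous φ := φ.continuous_of_finiteDimensional
  have hφint : IntegrableOn φ T := hφcont.continuousOn.integrableOn_compact hTc
  have hφ0 : ∀ x ∈ T, 0 ≤ φ x := fun x hx => (hφT hx).1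
  set τ := (volume T).toReal
  have hφτ : ∫ x in T, φ x = τ / 3 := by
    have hmass := mul_setIntegral_eq_one_of_map_eq_withDensity_indicator hTm (by positivity)
      hφcont.measurable hφ0 hφint hYmeas hYlaw
    rcases eq_or_ne τ 0 with hτ | hτ
    · simp [hτ] at hmass
    · field_simp at hmass ⊢
      linarith
  have hfφ := Integrable.mul_of_integrable_sq_mul hfmeas.aestronglyMeasurable hφint
    (ae_restrict_of_forall_mem hTm hφ0) hfint
  rw [← hφτ]
  calc _ ≤ ∫⁻ y in T, ENNReal.ofReal (φ y)
          * ∫⁻ x in T, ‖f x - f y‖ₑ ^ 2 * ENNReal.ofReal (φ x) :=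
        ofReal_integral_sq_sub_le_of_map_eq_withDensity_indicator hTm (by positivity)
          hφcont.measurable hφ0 hφint hYmeas hYlaw hfmeas hfφ
    _ ≤ ∫⁻ y in T, ∫⁻ x in T, ‖f x - f y‖ₑ ^ 2 :=
        setLIntegral_mono' hTm fun y hy => mul_le_of_le_one_of_le (hφ1 y hy) <|
          setLIntegral_mono' hTm fun x hx => mul_le_of_le_one_right' (hφ1 x hx)
    _ ≤ ∫⁻ y in T, ∫⁻ x in T, ENNReal.ofReal (h ^ (2 + 2 * s))
          * ENNReal.ofReal (|f x - f y| ^ 2 / dist x y ^ (2 + 2 * s)) :=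
        setLIntegral_mono' hTm fun y hy => setLIntegral_mono' hTm fun x hx =>
          enorm_sub_sq_le_rpow_mul f (by linarith) (hdiam x hx y hy)
    _ = _ := by
        simp_rw [lintegral_const_mul' _ _ ENNReal.ofReal_ne_top]
        congr 1
        exact lintegral_congr fun y => lintegral_congr fun x => by rw [abs_sub_comm, dist_comm]

/-- Mean-square error bound for the importance sampling estimator on a triangle
with edge lengths at most `h` via the fractional Sobolev seminorm:
`E[|∫_T f φ − (|T|/3) f(Y)|²] ≤ h^{2+2s} ∫_T ∫_T |f x − f z|²/|x−z|^{2+2s}`.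
The right-hand side is formulated as a lower Lebesgue integral, so the
inequality also covers the case of an infinite seminorm. -/
theorem stmt_10
    {Ω : Type*} [MeasurableSpace Ω] (P : Measure Ω) [IsProbabilityMeasure P]
    (h : ℝ) (hh : 0 < h)
    (A B C : EuclideanSpace ℝ (Fin 2))
    (hABC : AffineIndependent ℝ ![A, B, C])
    (hAB : dist A B ≤ h) (hAC : dist A C ≤ h) (hBC : dist B C ≤ h)
    (T : Set (EuclideanSpace ℝ (Fin 2))) (hT : T = convexHull ℝ {A, B, C})
    (φ : EuclideanSpace ℝ (Fin 2) →ᵃ[ℝ] ℝ)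
    (hA : φ A = 1) (hB : φ B = 0) (hC : φ C = 0)
    (Y : Ω → EuclideanSpace ℝ (Fin 2)) (hYmeas : Measurable Y)
    (hYlaw : Measure.map Y P = volume.withDensity
      (fun x => ENNReal.ofReal
        (T.indicator (fun x => 3 * (volume T).toReal⁻¹ * φ x) x)))
    (s : ℝ) (hs0 : 0 < s) (hs1 : s < 1)
    (f : EuclideanSpace ℝ (Fin 2) → ℝ) (hfmeas : Measurable f)
    (hfint : IntegrableOn (fun x => f x ^ 2 * φ x) T) :
    ENNReal.ofReal
        (∫ ω, |(∫ x in T, f x * φ x) - (volume T).toReal / 3 * f (Y ω)| ^ 2 ∂P)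
      ≤ ENNReal.ofReal (h ^ (2 + 2 * s))
          * ∫⁻ x in T, ∫⁻ z in T,
              ENNReal.ofReal (|f x - f z| ^ 2 / dist x z ^ (2 + 2 * s)) :=
  stmt_10_general P h A B C hAB hAC hBC T hT φ hA hB hC Y hYmeas hYlaw s hs0 f hfmeas hfint
end

section
/- Let U₁ and U₂ be independent random variables, each uniformly distributed on the interval [0,1], and define the random variable Z : Ω → ℝ² by Z = (U₁, U₂) if U₁ + U₂ ≤ 1 and Z = (1 − U₁, 1 − U₂) otherwise. Then Z is uniformly distributed on the standard 2-simplex S₂ = {(α, β) ∈ ℝ² : α ≥ 0, β ≥ 0, α + β ≤ 1}; that is, the law of Z equals 2 times the Lebesgue measure restricted to S₂. -/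
/-!
Independence makes `(U₁, U₂)` uniform on the unit square. The fold is the identity on the
lower triangle `S`, and on the upper triangle it is the point reflection `p ↦ (1, 1) - p`, which
preserves Lebesgue measure and maps the upper triangle onto `S` up to the null hypotenuse. Each
half of the square therefore contributes one copy of Lebesgue measure on `S`.
-/

open MeasureTheory ProbabilityTheory Set

def unitTriangle : Set (ℝ × ℝ) := {p | 0 ≤ p.1 ∧ 0 ≤ p.2 ∧ p.1 + p.2 ≤ 1}

noncomputable def foldUnitSquare (p : ℝ × ℝ) : ℝ × ℝ :=
  if p.1 + p.2 ≤ 1 then p else (1 - p.1, 1 - p.2)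

lemma measurableSet_setOf_fst_add_snd_le (c : ℝ) :
    MeasurableSet {p : ℝ × ℝ | p.1 + p.2 ≤ c} :=
  measurableSet_le (measurable_fst.add measurable_snd) measurable_const

lemma measurableSet_unitTriangle : MeasurableSet unitTriangle :=
  (measurableSet_le measurable_const measurable_fst).inter
    ((measurableSet_le measurable_const measurable_snd).inter
      (measurableSet_setOf_fst_add_snd_le 1))

lemma measurable_foldUnitSquare : Measurable foldUnitSquare :=
  Measurable.ite (measurableSet_setOf_fst_add_snd_le 1) measurable_id
    ((measurable_const.sub measurable_fst).prodMk (measurable_const.sub measurable_snd))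

lemma volume_setOf_fst_add_snd_eq (c : ℝ) : volume {p : ℝ × ℝ | p.1 + p.2 = c} = 0 := by
  have hm : MeasurableSet {p : ℝ × ℝ | p.1 + p.2 = c} :=
    (measurable_fst.add measurable_snd) (measurableSet_singleton c)
  have hfiber (x : ℝ) : {y : ℝ | x + y = c} = {c - x} := by
    ext y
    simp only [mem_ofPred_eq, mem_singleton_iff]
    constructor <;> intro h <;> linarith
  rw [Measure.volume_eq_prod, Measure.prod_apply hm]
  simp [hfiber]

lemma unitSquare_inter_setOf_fst_add_snd_le :
    Icc (0 : ℝ) 1 ×ˢ Icc (0 : ℝ) 1 ∩ {p | p.1 + p.2 ≤ 1} = unitTriangle := by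
  ext p
  simp only [unitTriangle, mem_inter_iff, mem_prod, mem_Icc, mem_ofPred_eq]
  constructor
  · rintro ⟨⟨⟨h₁, -⟩, h₂, -⟩, hsum⟩
    exact ⟨h₁, h₂, hsum⟩
  · rintro ⟨h₁, h₂, hsum⟩
    exact ⟨⟨⟨h₁, by linarith⟩, h₂, by linarith⟩, hsum⟩

lemma preimage_one_sub_setOf_lt_eq_unitSquare_diff :
    (fun p : ℝ × ℝ => (1, 1) - p) ⁻¹' {p | 0 ≤ p.1 ∧ 0 ≤ p.2 ∧ p.1 + p.2 < 1}
      = Icc (0 : ℝ) 1 ×ˢ Icc (0 : ℝ) 1 \ {p | p.1 + p.2 ≤ 1} := by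
  ext p
  simp only [mem_preimage, Prod.fst_sub, Prod.snd_sub, mem_ofPred_eq, mem_sdiff, mem_prod,
    mem_Icc, not_le]
  constructor
  · rintro ⟨h₁, h₂, hsum⟩
    exact ⟨⟨⟨by linarith, by linarith⟩, by linarith, by linarith⟩, by linarith⟩
  · rintro ⟨⟨⟨-, h₁⟩, -, h₂⟩, hsum⟩
    exact ⟨by linarith, by linarith, by linarith⟩

lemma setOf_lt_ae_eq_unitTriangle :
    {p : ℝ × ℝ | 0 ≤ p.1 ∧ 0 ≤ p.2 ∧ p.1 + p.2 < 1} =ᵐ[volume] unitTriangle := by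
  refine Filter.eventuallyEq_of_mem (s := {p : ℝ × ℝ | p.1 + p.2 = 1}ᶜ) ?_ fun p hp => ?_
  · rw [mem_ae_iff, compl_compl]
    exact volume_setOf_fst_add_snd_eq 1
  · simp only [mem_compl_iff, mem_ofPred_eq] at hp
    simp only [unitTriangle, eq_iff_iff]
    exact and_congr_right' (and_congr_right' ⟨le_of_lt, fun h => lt_of_le_of_ne h hp⟩)

lemma map_foldUnitSquare_restrict_unitTriangle :
    (volume.restrict unitTriangle).map foldUnitSquare = volume.restrict unitTriangle := by
  have hid : foldUnitSquare =ᵐ[volume.restrict unitTriangle] id := by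
    refine (ae_restrict_iff' measurableSet_unitTriangle).2 (ae_of_all _ fun p hp => ?_)
    exact if_pos hp.2.2
  rw [Measure.map_congr hid, Measure.map_id]

lemma map_foldUnitSquare_restrict_upper :
    (volume.restrict (Icc (0 : ℝ) 1 ×ˢ Icc (0 : ℝ) 1 \ {p | p.1 + p.2 ≤ 1})).map
      foldUnitSquare = volume.restrict unitTriangle := by
  have hmeas : MeasurableSet {p : ℝ × ℝ | 0 ≤ p.1 ∧ 0 ≤ p.2 ∧ p.1 + p.2 < 1} :=
    (measurableSet_le measurable_const measurable_fst).inter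
      ((measurableSet_le measurable_const measurable_snd).inter
        (measurableSet_lt (measurable_fst.add measurable_snd) measurable_const))
  have hreflect : foldUnitSquare
      =ᵐ[volume.restrict (Icc (0 : ℝ) 1 ×ˢ Icc (0 : ℝ) 1 \ {p | p.1 + p.2 ≤ 1})]
        fun p => (1, 1) - p := by
    refine (ae_restrict_iff' ((measurableSet_Icc.prod measurableSet_Icc).diff
      (measurableSet_setOf_fst_add_snd_le 1))).2 (ae_of_all _ fun p hp => ?_)
    exact if_neg hp.2
  rw [Measure.map_congr hreflect, ← preimage_one_sub_setOf_lt_eq_unitSquare_diff,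
    (((volume : Measure (ℝ × ℝ)).measurePreserving_sub_left (1, 1)).restrict_preimage
      hmeas).map_eq, Measure.restrict_congr_set setOf_lt_ae_eq_unitTriangle]

theorem map_foldUnitSquare_restrict_unitSquare :
    (volume.restrict (Icc (0 : ℝ) 1 ×ˢ Icc (0 : ℝ) 1)).map foldUnitSquare
      = (2 : ENNReal) • volume.restrict unitTriangle := by
  rw [← Measure.restrict_inter_add_sdiff _ (measurableSet_setOf_fst_add_snd_le 1),
    Measure.map_add _ _ measurable_foldUnitSquare, unitSquare_inter_setOf_fst_add_snd_le,
    map_foldUnitSquare_restrict_unitTriangle, map_foldUnitSquare_restrict_upper, two_smul]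

theorem stmt_11_general
    {Ω : Type*} [MeasurableSpace Ω] (P : Measure Ω)
    (U₁ U₂ : Ω → ℝ) (hU₁meas : Measurable U₁) (hU₂meas : Measurable U₂)
    (hU₁law : Measure.map U₁ P = volume.restrict (Set.Icc (0 : ℝ) 1))
    (hU₂law : Measure.map U₂ P = volume.restrict (Set.Icc (0 : ℝ) 1))
    (hindep : IndepFun U₁ U₂ P)
    (Z : Ω → ℝ × ℝ)
    (hZ : ∀ ω, Z ω =
      if U₁ ω + U₂ ω ≤ 1 then (U₁ ω, U₂ ω) else (1 - U₁ ω, 1 - U₂ ω)) :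
    Measure.map Z P
      = (2 : ENNReal)
          • volume.restrict {p : ℝ × ℝ | 0 ≤ p.1 ∧ 0 ≤ p.2 ∧ p.1 + p.2 ≤ 1} := by
  have hpair : P.map (fun ω => (U₁ ω, U₂ ω))
      = volume.restrict (Icc (0 : ℝ) 1 ×ˢ Icc (0 : ℝ) 1) := by
    rw [(indepFun_iff_map_prod_eq_prod_map_map' hU₁meas.aemeasurable hU₂meas.aemeasurable
      (hU₁law ▸ inferInstance) (hU₂law ▸ inferInstance)).1 hindep, hU₁law, hU₂law,
      Measure.prod_restrict, ← Measure.volume_eq_prod]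
  have hfold : Z = foldUnitSquare ∘ fun ω => (U₁ ω, U₂ ω) := funext hZ
  rw [hfold, ← Measure.map_map measurable_foldUnitSquare (hU₁meas.prodMk hU₂meas), hpair,
    map_foldUnitSquare_restrict_unitSquare]
  rfl

/-- The folding construction produces a uniformly distributed sample on the
standard 2-simplex: if `U₁, U₂` are independent and uniform on `[0,1]` and
`Z = (U₁, U₂)` when `U₁ + U₂ ≤ 1`, `Z = (1−U₁, 1−U₂)` otherwise, then the law
of `Z` is `2` times Lebesgue measure restricted to the simplex. -/
theorem stmt_11
    {Ω : Type*} [MeasurableSpace Ω] (P : Measure Ω) [IsProbabilityMeasure P]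
    (U₁ U₂ : Ω → ℝ) (hU₁meas : Measurable U₁) (hU₂meas : Measurable U₂)
    (hU₁law : Measure.map U₁ P = volume.restrict (Set.Icc (0 : ℝ) 1))
    (hU₂law : Measure.map U₂ P = volume.restrict (Set.Icc (0 : ℝ) 1))
    (hindep : IndepFun U₁ U₂ P)
    (Z : Ω → ℝ × ℝ)
    (hZ : ∀ ω, Z ω =
      if U₁ ω + U₂ ω ≤ 1 then (U₁ ω, U₂ ω) else (1 - U₁ ω, 1 - U₂ ω)) :
    Measure.map Z P
      = (2 : ENNReal)
          • volume.restrict {p : ℝ × ℝ | 0 ≤ p.1 ∧ 0 ≤ p.2 ∧ p.1 + p.2 ≤ 1} :=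
  stmt_11_general P U₁ U₂ hU₁meas hU₂meas hU₁law hU₂law hindep Z hZ
end

section
/- Let D ⊂ ℝ² be a bounded measurable set and let T_1, …, T_N be pairwise disjoint measurable subsets of D, each of finite positive Lebesgue measure and of diameter at most h ∈ (0,1], whose union equals D up to a Lebesgue-null set. Let φ_1, …, φ_m : D → ℝ be measurable with 0 ≤ φ_j ≤ 1 and ∑_{j=1}^m φ_j ≤ 1 pointwise on D, and let A ⊆ {1,…,N} × {1,…,m} satisfy: ∫_{T_i} φ_j(x) dx = |T_i|/3 for every (i,j) ∈ A and φ_j = 0 almost everywhere on T_i for every (i,j) ∉ A. Let (Y_{i,j})_{(i,j) ∈ A} be an independent family of random variables where Y_{i,j} has law with density 3|T_i|^{-1} φ_j(x) 𝟙_{T_i}(x) with respect to Lebesgue measure. Then for every s ∈ (0,1), every f ∈ L²(D) with finite Sobolev–Slobodeckij seminorm |f|_{W^{s,2}(D)}, and all coefficients v_1, …, v_m ∈ ℝ with max_j |v_j| ≤ M, it holds with v := ∑_{j=1}^m v_j φ_j that E[|∫_D f(x) v(x) dx − (1/3) ∑_{(i,j) ∈ A} |T_i| v_j f(Y_{i,j})|²]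 ≤ h^{2(1+s)} M² |f|²_{W^{s,2}(D)}. -/
/-!
Write `c_i = 3 / |T_i|` and `Z_{ij} = v_j c_i⁻¹ f(Y_{ij})`. Each `Z_{ij}` has mean
`v_j ∫_{T_i} φ_j f`; since the cells cover `D` and `φ_j` vanishes on the cells outside `A`, the
estimator `∑ Z_{ij}` is unbiased, so its mean-square error is its variance, which by independence
is `∑ Var Z_{ij}`. For a random variable with law `ν`, `Var g = ½ ∫∫ (g x - g z)² dν(x) dν(z)`;
for `ν = c_i φ_j 1_{T_i} dx` this gives
`Var Z_{ij} = ½ v_j² ∫∫_{T_i × T_i} φ_j(x) φ_j(z) (f x - f z)²`.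
As `|x - z| ≤ h` on a cell, `(f x - f z)² ≤ h^{2+2s} |f x - f z|² / |x - z|^{2+2s}`, and
`∑_j φ_j(x) φ_j(z) ≤ 1` together with the disjointness of the cells bounds the total by
`½ h^{2+2s} M² |f|²_{W^{s,2}(D)}`.
-/

open MeasureTheory ProbabilityTheory

section Density

variable {α : Type*} [MeasurableSpace α] {μ : Measure α} {ρ : α → ℝ}

theorem integral_withDensity_ofReal (hρ : AEMeasurable ρ μ) (hρ0 : 0 ≤ᵐ[μ] ρ) (g : α → ℝ) :
    ∫ x, g x ∂μ.withDensity (fun x => ENNReal.ofReal (ρ x)) = ∫ x, ρ x * g x ∂μ := by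
  rw [integral_withDensity_eq_integral_toReal_smul₀ hρ.ennreal_ofReal
    (ae_of_all _ fun _ => ENNReal.ofReal_lt_top)]
  refine integral_congr_ae ?_
  filter_upwards [hρ0] with x hx
  rw [ENNReal.toReal_ofReal hx, smul_eq_mul]

theorem integral_prod_withDensity_ofReal [SFinite μ] (hρ : AEMeasurable ρ μ) (hρ0 : 0 ≤ᵐ[μ] ρ)
    (F : α × α → ℝ) :
    ∫ q, F q ∂(μ.withDensity fun x => ENNReal.ofReal (ρ x)).prod
        (μ.withDensity fun x => ENNReal.ofReal (ρ x))
      = ∫ q, ρ q.1 * ρ q.2 * F q ∂μ.prod μ := by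
  have hρρ0 : 0 ≤ᵐ[μ.prod μ] fun q => ρ q.1 * ρ q.2 := by
    filter_upwards [Measure.quasiMeasurePreserving_fst.ae hρ0,
      Measure.quasiMeasurePreserving_snd.ae hρ0] with q h1 h2
    exact mul_nonneg h1 h2
  rw [prod_withDensity₀ hρ.ennreal_ofReal hρ.ennreal_ofReal,
    withDensity_congr_ae (g := fun q => ENNReal.ofReal (ρ q.1 * ρ q.2)),
    integral_withDensity_ofReal (by fun_prop) hρρ0]
  filter_upwards [Measure.quasiMeasurePreserving_fst.ae hρ0] with q h1
  rw [ENNReal.ofReal_mul h1]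

theorem withDensity_ofReal_le_smul {C : ℝ} (hρC : ∀ᵐ x ∂μ, ρ x ≤ C) :
    μ.withDensity (fun x => ENNReal.ofReal (ρ x)) ≤ ENNReal.ofReal C • μ := by
  rw [← withDensity_const]
  exact withDensity_mono (hρC.mono fun x hx => ENNReal.ofReal_le_ofReal hx)

theorem MeasureTheory.MemLp.withDensity_ofReal {E : Type*} [NormedAddCommGroup E] {g : α → E}
    {p : ENNReal} {C : ℝ} (hg : MemLp g p μ) (hρC : ∀ᵐ x ∂μ, ρ x ≤ C) :
    MemLp g p (μ.withDensity fun x => ENNReal.ofReal (ρ x)) :=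
  (hg.smul_measure ENNReal.ofReal_ne_top).mono_measure (withDensity_ofReal_le_smul hρC)

theorem withDensity_ofReal_indicator {s : Set α} (hs : MeasurableSet s) :
    μ.withDensity (fun x => ENNReal.ofReal (s.indicator ρ x))
      = (μ.restrict s).withDensity fun x => ENNReal.ofReal (ρ x) := by
  rw [← withDensity_indicator hs]
  congr 1
  ext x
  by_cases hx : x ∈ s <;> simp [hx]

end Density

theorem ProbabilityTheory.variance_eq_half_integral_prod_sq_sub {α : Type*} [MeasurableSpace α]
    {μ : Measure α} [IsProbabilityMeasure μ] {g : α → ℝ} (hg : MemLp g 2 μ) :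
    Var[g; μ] = 2⁻¹ * ∫ q, (g q.1 - g q.2) ^ 2 ∂μ.prod μ := by
  have h1 : Integrable g μ := hg.integrable one_le_two
  have h2 : Integrable (fun x => g x ^ 2) μ := hg.integrable_sq
  have hfst : Integrable (fun q : α × α => g q.1 ^ 2) (μ.prod μ) := h2.comp_fst μ
  have hsnd : Integrable (fun q : α × α => g q.2 ^ 2) (μ.prod μ) := h2.comp_snd μ
  have hcross : Integrable (fun q : α × α => 2 * (g q.1 * g q.2)) (μ.prod μ) :=
    (h1.mul_prod h1).const_mul 2
  have hexpand : ∀ q : α × α, (g q.1 - g q.2) ^ 2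
      = (g q.1 ^ 2 + g q.2 ^ 2) - 2 * (g q.1 * g q.2) := fun q => by ring
  simp_rw [hexpand]
  rw [integral_sub (f := fun q => g q.1 ^ 2 + g q.2 ^ 2) (hfst.add hsnd) hcross,
    integral_add hfst hsnd, integral_const_mul, integral_prod_mul,
    integral_fun_fst (fun x => g x ^ 2),
    integral_fun_snd (fun x => g x ^ 2), variance_eq_sub hg]
  simp only [probReal_univ, smul_eq_mul, one_mul, Pi.pow_apply]
  ring

theorem ProbabilityTheory.integral_sq_abs_sub_eq_variance {Ω : Type*} [MeasurableSpace Ω]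
    {P : Measure Ω} {X : Ω → ℝ} {a : ℝ} (hX : AEMeasurable X P) (ha : P[X] = a) :
    ∫ ω, |a - X ω| ^ 2 ∂P = Var[X; P] := by
  rw [variance_eq_integral hX, ha]
  congr 1 with ω
  rw [sq_abs, ← neg_sub, neg_sq]

section Sampling

variable {α Ω : Type*} [MeasurableSpace α] [MeasurableSpace Ω] {μ : Measure α} {P : Measure Ω}
  {Y : Ω → α} {ρ g : α → ℝ}

theorem integral_comp_of_map_eq_withDensity (hY : AEMeasurable Y P)
    (hlaw : P.map Y = μ.withDensity fun x => ENNReal.ofReal (ρ x)) (hρ : AEMeasurable ρ μ)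
    (hρ0 : 0 ≤ᵐ[μ] ρ) (hg : AEStronglyMeasurable g (P.map Y)) :
    ∫ ω, g (Y ω) ∂P = ∫ x, ρ x * g x ∂μ := by
  rw [← integral_map hY hg, hlaw, integral_withDensity_ofReal hρ hρ0]

theorem variance_comp_of_map_eq_withDensity [IsProbabilityMeasure P] [SFinite μ]
    (hY : AEMeasurable Y P) (hlaw : P.map Y = μ.withDensity fun x => ENNReal.ofReal (ρ x))
    (hρ : AEMeasurable ρ μ) (hρ0 : 0 ≤ᵐ[μ] ρ) (hg : MemLp g 2 (P.map Y)) :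
    Var[fun ω => g (Y ω); P] = 2⁻¹ * ∫ q, ρ q.1 * ρ q.2 * (g q.1 - g q.2) ^ 2 ∂μ.prod μ := by
  have := Measure.isProbabilityMeasure_map hY
  rw [← Function.comp_def, ← variance_map hg.aestronglyMeasurable.aemeasurable hY,
    variance_eq_half_integral_prod_sq_sub hg, hlaw, integral_prod_withDensity_ofReal hρ hρ0]

end Sampling

theorem sq_sub_le_rpow_mul_div_rpow {α : Type*} [MetricSpace α] (f : α → ℝ) {x z : α} {h e : ℝ}
    (hd : dist x z ≤ h) (he : 0 ≤ e) :
    (f x - f z) ^ 2 ≤ h ^ e * (|f x - f z| ^ 2 / dist x z ^ e) := by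
  rcases eq_or_ne x z with rfl | hxz
  · simp
  have hpos : 0 < dist x z ^ e := Real.rpow_pos_of_pos (dist_pos.2 hxz) e
  calc (f x - f z) ^ 2 = dist x z ^ e * (|f x - f z| ^ 2 / dist x z ^ e) := by
        rw [sq_abs, mul_div_cancel₀ _ hpos.ne']
    _ ≤ h ^ e * (|f x - f z| ^ 2 / dist x z ^ e) := by gcongr

theorem integral_mul_sq_sub_le_rpow_mul {α : Type*} [MetricSpace α] [MeasurableSpace α]
    {ν : Measure (α × α)} {w : α × α → ℝ} {f : α → ℝ} {h e : ℝ} (he : 0 ≤ e)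
    (hdist : ∀ᵐ q ∂ν, dist q.1 q.2 ≤ h) (hw : 0 ≤ᵐ[ν] w)
    (hint : Integrable (fun q => w q * (|f q.1 - f q.2| ^ 2 / dist q.1 q.2 ^ e)) ν) :
    ∫ q, w q * (f q.1 - f q.2) ^ 2 ∂ν
      ≤ h ^ e * ∫ q, w q * (|f q.1 - f q.2| ^ 2 / dist q.1 q.2 ^ e) ∂ν := by
  rw [← integral_const_mul]
  refine integral_mono_of_nonneg ?_ (hint.const_mul _) ?_
  · filter_upwards [hw] with q hq
    exact mul_nonneg hq (sq_nonneg _)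
  · filter_upwards [hdist, hw] with q hd hq
    calc w q * (f q.1 - f q.2) ^ 2
        ≤ w q * (h ^ e * (|f q.1 - f q.2| ^ 2 / dist q.1 q.2 ^ e)) :=
          mul_le_mul_of_nonneg_left (sq_sub_le_rpow_mul_div_rpow f hd he) hq
      _ = h ^ e * (w q * (|f q.1 - f q.2| ^ 2 / dist q.1 q.2 ^ e)) := by ring

section WeightedSampling

variable {α Ω : Type*} [MeasurableSpace α] [MeasurableSpace Ω] {μ : Measure α} {P : Measure Ω}
  {Y : Ω → α} {c : ℝ} {φ f : α → ℝ}

theorem integral_inv_mul_comp_of_map_eq_withDensity (hY : AEMeasurable Y P)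
    (hlaw : P.map Y = μ.withDensity fun x => ENNReal.ofReal (c * φ x)) (hc : 0 < c)
    (hφ : AEMeasurable φ μ) (hφ0 : 0 ≤ᵐ[μ] φ) (hf : AEStronglyMeasurable f (P.map Y)) :
    ∫ ω, c⁻¹ * f (Y ω) ∂P = ∫ x, φ x * f x ∂μ := by
  have hcφ0 : 0 ≤ᵐ[μ] fun x => c * φ x := hφ0.mono fun x hx => mul_nonneg hc.le hx
  rw [integral_const_mul, integral_comp_of_map_eq_withDensity hY hlaw (hφ.const_mul c) hcφ0 hf,
    ← integral_const_mul]
  congr 1 with x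
  field_simp

theorem variance_inv_mul_comp_of_map_eq_withDensity [IsProbabilityMeasure P] [SFinite μ]
    (hY : AEMeasurable Y P) (hlaw : P.map Y = μ.withDensity fun x => ENNReal.ofReal (c * φ x))
    (hc : 0 < c) (hφ : AEMeasurable φ μ) (hφ0 : 0 ≤ᵐ[μ] φ) (hf : MemLp f 2 (P.map Y)) :
    Var[fun ω => c⁻¹ * f (Y ω); P]
      = 2⁻¹ * ∫ q, φ q.1 * φ q.2 * (f q.1 - f q.2) ^ 2 ∂μ.prod μ := by
  have hcφ0 : 0 ≤ᵐ[μ] fun x => c * φ x := hφ0.mono fun x hx => mul_nonneg hc.le hx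
  rw [variance_const_mul,
    variance_comp_of_map_eq_withDensity hY hlaw (hφ.const_mul c) hcφ0 hf, mul_left_comm,
    ← integral_const_mul]
  congr 2 with q
  field_simp

end WeightedSampling

theorem sum_setIntegral_le_setIntegral {α ι : Type*} [MeasurableSpace α] [Fintype ι]
    {μ : Measure α} {s : ι → Set α} {S : Set α} {g : α → ℝ} (hs : ∀ i, MeasurableSet (s i))
    (hdisj : Pairwise (Function.onFun Disjoint s)) (hsub : ∀ i, s i ⊆ S) (hg0 : 0 ≤ᵐ[μ.restrict S] g) (hg : IntegrableOn g S μ) :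
    ∑ i, ∫ x in s i, g x ∂μ ≤ ∫ x in S, g x ∂μ := by
  rw [← integral_iUnion_fintype hs hdisj fun i => hg.mono_set (hsub i)]
  exact setIntegral_mono_set hg hg0 (Set.iUnion_subset hsub).eventuallyLE

section PartitionOfUnity

variable {α ι κ : Type*} [MeasurableSpace α] [Fintype ι] [Fintype κ] {μ : Measure α}
  {D : Set α} {T : ι → Set α} {φ : κ → α → ℝ}

variable (μ D T) in
structure IsAEPartition : Prop where
  measurableSet : ∀ i, MeasurableSet (T i)
  subset : ∀ i, T i ⊆ D
  pairwise_disjoint : Pairwise (Function.onFun Disjoint T)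
  measure_diff_iUnion : μ (D \ ⋃ i, T i) = 0

variable (D φ) in
structure IsSubPartitionOfUnityOn : Prop where
  measurable : ∀ j, Measurable (φ j)
  nonneg : ∀ j, ∀ x ∈ D, 0 ≤ φ j x
  le_one : ∀ j, ∀ x ∈ D, φ j x ≤ 1
  sum_le_one : ∀ x ∈ D, ∑ j, φ j x ≤ 1

theorem IsAEPartition.setIntegral_eq_sum (hT : IsAEPartition μ D T) {g : α → ℝ}
    (hg : IntegrableOn g D μ) : ∫ x in D, g x ∂μ = ∑ i, ∫ x in T i, g x ∂μ := by
  have hD : D =ᵐ[μ] ⋃ i, T i := ae_eq_set.2 ⟨hT.measure_diff_iUnion,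
    by rw [Set.sdiff_eq_empty.2 (Set.iUnion_subset hT.subset), measure_empty]⟩
  rw [setIntegral_congr_set hD, integral_iUnion_fintype hT.measurableSet hT.pairwise_disjoint
    fun i => hg.mono_set (hT.subset i)]

theorem IsAEPartition.setIntegral_mul_sum_eq_sum (hT : IsAEPartition μ D T) {A : Finset (ι × κ)}
    (hAc : ∀ p : ι × κ, p ∉ A → ∀ᵐ x ∂μ.restrict (T p.1), φ p.2 x = 0) {g : α → ℝ}
    (hg : ∀ j, IntegrableOn (fun x => φ j x * g x) D μ) (v : κ → ℝ) :
    ∫ x in D, g x * ∑ j, v j * φ j x ∂μ = ∑ p ∈ A, v p.2 * ∫ x in T p.1, φ p.2 x * g x ∂μ := by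
  have hexpand : ∀ x, g x * ∑ j, v j * φ j x = ∑ j, v j * (φ j x * g x) := fun x => by
    rw [Finset.mul_sum]
    exact Finset.sum_congr rfl fun j _ => by ring
  have hvanish : ∀ p ∉ A, ∫ x in T p.1, φ p.2 x * g x ∂μ = 0 := fun p hp =>
    integral_eq_zero_of_ae ((hAc p hp).mono fun x hx => by simp [hx])
  calc ∫ x in D, g x * ∑ j, v j * φ j x ∂μ = ∑ j, v j * ∫ x in D, φ j x * g x ∂μ := by
        simp_rw [hexpand]
        rw [integral_finsetSum _ fun j _ => (hg j).const_mul _]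
        simp_rw [integral_const_mul]
    _ = ∑ j, v j * ∑ i, ∫ x in T i, φ j x * g x ∂μ := by
        simp_rw [hT.setIntegral_eq_sum (hg _)]
    _ = ∑ p : ι × κ, v p.2 * ∫ x in T p.1, φ p.2 x * g x ∂μ := by
        rw [Fintype.sum_prod_type, Finset.sum_comm]
        simp_rw [Finset.mul_sum]
    _ = ∑ p ∈ A, v p.2 * ∫ x in T p.1, φ p.2 x * g x ∂μ :=
        (Finset.sum_subset (Finset.subset_univ A) fun p _ hp => by rw [hvanish p hp, mul_zero]).symm

variable [SFinite μ]

theorem ae_mem_prod_restrict {s : Set α} (hs : MeasurableSet s) :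
    ∀ᵐ q ∂(μ.restrict s).prod (μ.restrict s), q ∈ s ×ˢ s := by
  rw [Measure.prod_restrict]
  exact ae_restrict_mem (hs.prod hs)

theorem integrable_mul_mul_prod_restrict {s : Set α} {ψ : α → ℝ} {K : α × α → ℝ}
    (hs : MeasurableSet s) (hψ : Measurable ψ) (hψ0 : ∀ x ∈ s, 0 ≤ ψ x) (hψ1 : ∀ x ∈ s, ψ x ≤ 1)
    (hK : Integrable K ((μ.restrict s).prod (μ.restrict s))) :
    Integrable (fun q => ψ q.1 * ψ q.2 * K q) ((μ.restrict s).prod (μ.restrict s)) := by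
  refine hK.bdd_mul (c := 1) (by fun_prop) ?_
  filter_upwards [ae_mem_prod_restrict hs] with q hq
  rw [norm_mul, Real.norm_of_nonneg (hψ0 _ hq.1), Real.norm_of_nonneg (hψ0 _ hq.2)]
  exact mul_le_one₀ (hψ1 _ hq.1) (hψ0 _ hq.2) (hψ1 _ hq.2)

theorem IsSubPartitionOfUnityOn.sum_integral_mul_mul_le_integral {s : Set α} {K : α × α → ℝ}
    (hφ : IsSubPartitionOfUnityOn s φ) (hs : MeasurableSet s) (hK0 : ∀ q, 0 ≤ K q)
    (hK : Integrable K ((μ.restrict s).prod (μ.restrict s))) :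
    ∑ j, ∫ q, φ j q.1 * φ j q.2 * K q ∂(μ.restrict s).prod (μ.restrict s)
      ≤ ∫ q, K q ∂(μ.restrict s).prod (μ.restrict s) := by
  have hint := fun j => integrable_mul_mul_prod_restrict hs (hφ.measurable j) (hφ.nonneg j)
    (hφ.le_one j) hK
  rw [← integral_finsetSum _ fun j _ => hint j]
  refine integral_mono_ae (integrable_finsetSum _ fun j _ => hint j) hK ?_
  filter_upwards [ae_mem_prod_restrict hs] with q hq
  rw [← Finset.sum_mul]
  refine mul_le_of_le_one_left (hK0 q)
    ((Finset.sum_le_sum fun j _ => ?_).trans (hφ.sum_le_one _ hq.1))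
  exact mul_le_of_le_one_right (hφ.nonneg j _ hq.1) (hφ.le_one j _ hq.2)

theorem IsSubPartitionOfUnityOn.mono {s t : Set α} (hφ : IsSubPartitionOfUnityOn t φ)
    (hst : s ⊆ t) : IsSubPartitionOfUnityOn s φ :=
  ⟨hφ.measurable, fun j x hx => hφ.nonneg j x (hst hx), fun j x hx => hφ.le_one j x (hst hx),
    fun x hx => hφ.sum_le_one x (hst hx)⟩

theorem IsAEPartition.sum_integral_mul_mul_le_integral (hT : IsAEPartition μ D T)
    (hφ : IsSubPartitionOfUnityOn D φ) (A : Finset (ι × κ)) {K : α × α → ℝ} (hK0 : ∀ q, 0 ≤ K q)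
    (hK : Integrable K ((μ.restrict D).prod (μ.restrict D))) :
    ∑ p ∈ A, ∫ q, φ p.2 q.1 * φ p.2 q.2 * K q ∂(μ.restrict (T p.1)).prod (μ.restrict (T p.1))
      ≤ ∫ q, K q ∂(μ.restrict D).prod (μ.restrict D) := by
  have hμT : ∀ i,
      (μ.restrict (T i)).prod (μ.restrict (T i)) ≤ (μ.restrict D).prod (μ.restrict D) :=
    fun i => by have := hT.subset i; gcongr
  have hKD : IntegrableOn K (D ×ˢ D) (μ.prod μ) := by rwa [IntegrableOn, ← Measure.prod_restrict]
  calc _ ≤ ∑ p : ι × κ, ∫ q, φ p.2 q.1 * φ p.2 q.2 * K q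
          ∂(μ.restrict (T p.1)).prod (μ.restrict (T p.1)) := by
        refine Finset.sum_le_sum_of_subset_of_nonneg (Finset.subset_univ A) fun p _ _ => ?_
        refine integral_nonneg_of_ae ?_
        filter_upwards [ae_mem_prod_restrict (hT.measurableSet p.1)] with q hq
        have := hφ.nonneg p.2 _ (hT.subset _ hq.1)
        have := hφ.nonneg p.2 _ (hT.subset _ hq.2)
        have := hK0 q
        positivity
    _ ≤ ∑ i, ∫ q, K q ∂(μ.restrict (T i)).prod (μ.restrict (T i)) := by
        rw [Fintype.sum_prod_type]
        exact Finset.sum_le_sum fun i _ =>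
          (hφ.mono (hT.subset i)).sum_integral_mul_mul_le_integral (hT.measurableSet i) hK0
            (hK.mono_measure (hμT i))
    _ ≤ ∫ q in D ×ˢ D, K q ∂μ.prod μ := by
        simp_rw [Measure.prod_restrict]
        exact sum_setIntegral_le_setIntegral
          (fun i => (hT.measurableSet i).prod (hT.measurableSet i))
          (fun i j hij => Set.disjoint_prod.2 (Or.inl (hT.pairwise_disjoint hij)))
          (fun i => Set.prod_mono (hT.subset i) (hT.subset i)) (ae_of_all _ hK0) hKD
    _ = ∫ q, K q ∂(μ.restrict D).prod (μ.restrict D) := by rw [Measure.prod_restrict]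

end PartitionOfUnity

section IndicatorDensity

variable {α Ω : Type*} [MeasurableSpace α] [MeasurableSpace Ω] {μ : Measure α} {P : Measure Ω}
  {Y : Ω → α} {T : Set α} {c : ℝ} {φ f : α → ℝ}

theorem memLp_map_of_map_eq_withDensity_indicator (hT : MeasurableSet T) (hc : 0 ≤ c)
    (hφ1 : ∀ x ∈ T, φ x ≤ 1)
    (hlaw : P.map Y = μ.withDensity fun x => ENNReal.ofReal (T.indicator (fun x => c * φ x) x))
    (hf : MemLp f 2 (μ.restrict T)) : MemLp f 2 (P.map Y) := by
  rw [hlaw, withDensity_ofReal_indicator hT]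
  refine hf.withDensity_ofReal (C := c) ?_
  filter_upwards [ae_restrict_mem hT] with x hx
  exact mul_le_of_le_one_right hc (hφ1 x hx)

theorem integral_inv_mul_comp_of_map_eq_withDensity_indicator (hY : AEMeasurable Y P)
    (hT : MeasurableSet T) (hc : 0 < c) (hφ : Measurable φ) (hφ0 : ∀ x ∈ T, 0 ≤ φ x)
    (hlaw : P.map Y = μ.withDensity fun x => ENNReal.ofReal (T.indicator (fun x => c * φ x) x))
    (hf : AEStronglyMeasurable f (P.map Y)) :
    ∫ ω, c⁻¹ * f (Y ω) ∂P = ∫ x in T, φ x * f x ∂μ := by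
  rw [withDensity_ofReal_indicator hT] at hlaw
  exact integral_inv_mul_comp_of_map_eq_withDensity hY hlaw hc hφ.aemeasurable
    ((ae_restrict_mem hT).mono hφ0) hf

theorem variance_inv_mul_comp_le_of_map_eq_withDensity_indicator [MetricSpace α] [SFinite μ]
    [IsProbabilityMeasure P] {h e : ℝ} (hY : AEMeasurable Y P) (hT : MeasurableSet T)
    (hdiam : ∀ x ∈ T, ∀ z ∈ T, dist x z ≤ h) (hc : 0 < c) (hφ : Measurable φ)
    (hφ0 : ∀ x ∈ T, 0 ≤ φ x) (hφ1 : ∀ x ∈ T, φ x ≤ 1)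
    (hlaw : P.map Y = μ.withDensity fun x => ENNReal.ofReal (T.indicator (fun x => c * φ x) x))
    (hf : MemLp f 2 (μ.restrict T)) (he : 0 ≤ e)
    (hK : Integrable (fun q => |f q.1 - f q.2| ^ 2 / dist q.1 q.2 ^ e)
      ((μ.restrict T).prod (μ.restrict T))) :
    Var[fun ω => c⁻¹ * f (Y ω); P] ≤ 2⁻¹ * (h ^ e * ∫ q, φ q.1 * φ q.2
      * (|f q.1 - f q.2| ^ 2 / dist q.1 q.2 ^ e) ∂(μ.restrict T).prod (μ.restrict T)) := by
  have hfY := memLp_map_of_map_eq_withDensity_indicator hT hc.le hφ1 hlaw hf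
  rw [withDensity_ofReal_indicator hT] at hlaw
  rw [variance_inv_mul_comp_of_map_eq_withDensity hY hlaw hc hφ.aemeasurable
    ((ae_restrict_mem hT).mono hφ0) hfY]
  gcongr
  refine integral_mul_sq_sub_le_rpow_mul (w := fun q => φ q.1 * φ q.2) he ?_ ?_
    (integrable_mul_mul_prod_restrict hT hφ hφ0 hφ1 hK)
  · filter_upwards [ae_mem_prod_restrict hT] with q hq
    exact hdiam _ hq.1 _ hq.2
  · filter_upwards [ae_mem_prod_restrict hT] with q hq
    exact mul_nonneg (hφ0 _ hq.1) (hφ0 _ hq.2)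

end IndicatorDensity

section Estimator

variable {α Ω ι κ : Type*} [MeasurableSpace α] [MeasurableSpace Ω] {μ : Measure α}
  {P : Measure Ω} {D : Set α} {T : ι → Set α} {φ : κ → α → ℝ} {A : Finset (ι × κ)}
  {Y : ι × κ → Ω → α} {c : ι → ℝ} {f : α → ℝ}

theorem IsAEPartition.memLp_comp_of_map_eq_withDensity_indicator [Fintype κ]
    (hT : IsAEPartition μ D T) (hφ : IsSubPartitionOfUnityOn D φ) (hc : ∀ i, 0 ≤ c i)
    (hY : ∀ p, Measurable (Y p))
    (hlaw : ∀ p ∈ A, P.map (Y p) = μ.withDensity fun x =>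
      ENNReal.ofReal ((T p.1).indicator (fun x => c p.1 * φ p.2 x) x))
    (hf : MemLp f 2 (μ.restrict D)) {p : ι × κ} (hp : p ∈ A) :
    MemLp (fun ω => f (Y p ω)) 2 P := by
  have hfY := memLp_map_of_map_eq_withDensity_indicator (hT.measurableSet p.1) (hc p.1)
    (fun x hx => hφ.le_one p.2 x (hT.subset p.1 hx)) (hlaw p hp)
    (hf.mono_measure (Measure.restrict_mono (hT.subset p.1) le_rfl))
  exact (memLp_map_measure_iff hfY.1 (hY p).aemeasurable).1 hfY

theorem IsAEPartition.integral_sum_inv_mul_comp_eq [Fintype ι] [Fintype κ] [IsFiniteMeasure P]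
    [IsFiniteMeasure (μ.restrict D)] (hT : IsAEPartition μ D T) (hD : MeasurableSet D)
    (hφ : IsSubPartitionOfUnityOn D φ)
    (hAc : ∀ p : ι × κ, p ∉ A → ∀ᵐ x ∂μ.restrict (T p.1), φ p.2 x = 0) (hc : ∀ i, 0 < c i)
    (hY : ∀ p, Measurable (Y p))
    (hlaw : ∀ p ∈ A, P.map (Y p) = μ.withDensity fun x =>
      ENNReal.ofReal ((T p.1).indicator (fun x => c p.1 * φ p.2 x) x))
    (hfmeas : Measurable f) (hf : MemLp f 2 (μ.restrict D)) (v : κ → ℝ) :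
    ∫ ω, ∑ p ∈ A, v p.2 * ((c p.1)⁻¹ * f (Y p ω)) ∂P = ∫ x in D, f x * ∑ j, v j * φ j x ∂μ := by
  have hφf : ∀ j, IntegrableOn (fun x => φ j x * f x) D μ := fun j => by
    refine (hf.integrable one_le_two).bdd_mul (c := 1) (hφ.measurable j).aestronglyMeasurable ?_
    filter_upwards [ae_restrict_mem hD] with x hx
    rw [Real.norm_of_nonneg (hφ.nonneg j x hx)]
    exact hφ.le_one j x hx
  have hfY := fun p (hp : p ∈ A) =>
    hT.memLp_comp_of_map_eq_withDensity_indicator hφ (fun i => (hc i).le) hY hlaw hf hp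
  rw [integral_finsetSum _ fun p hp =>
      (((hfY p hp).integrable one_le_two).const_mul _).const_mul _,
    hT.setIntegral_mul_sum_eq_sum hAc hφf v]
  refine Finset.sum_congr rfl fun p hp => ?_
  rw [integral_const_mul, integral_inv_mul_comp_of_map_eq_withDensity_indicator
    (hY p).aemeasurable (hT.measurableSet p.1) (hc p.1) (hφ.measurable p.2)
    (fun x hx => hφ.nonneg p.2 x (hT.subset p.1 hx)) (hlaw p hp) hfmeas.aestronglyMeasurable]

theorem IsAEPartition.variance_sum_inv_mul_comp_le [MetricSpace α] [SFinite μ] [Fintype ι]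
    [Fintype κ] [IsProbabilityMeasure P] {h e M : ℝ} (hT : IsAEPartition μ D T) (hh : 0 ≤ h)
    (hdiam : ∀ i, ∀ x ∈ T i, ∀ z ∈ T i, dist x z ≤ h) (hφ : IsSubPartitionOfUnityOn D φ)
    (hc : ∀ i, 0 < c i) (hY : ∀ p, Measurable (Y p))
    (hlaw : ∀ p ∈ A, P.map (Y p) = μ.withDensity fun x =>
      ENNReal.ofReal ((T p.1).indicator (fun x => c p.1 * φ p.2 x) x))
    (hindep : iIndepFun (fun p : {p : ι × κ // p ∈ A} => Y p.1) P)
    (hfmeas : Measurable f) (hf : MemLp f 2 (μ.restrict D)) (he : 0 ≤ e)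
    (hK : Integrable (fun q => |f q.1 - f q.2| ^ 2 / dist q.1 q.2 ^ e)
      ((μ.restrict D).prod (μ.restrict D))) {v : κ → ℝ} (hM : ∀ j, |v j| ≤ M) :
    Var[fun ω => ∑ p ∈ A, v p.2 * ((c p.1)⁻¹ * f (Y p ω)); P]
      ≤ M ^ 2 * (2⁻¹ * (h ^ e * ∫ q, |f q.1 - f q.2| ^ 2 / dist q.1 q.2 ^ e
        ∂(μ.restrict D).prod (μ.restrict D))) := by
  set Z : ι × κ → Ω → ℝ := fun p ω => v p.2 * ((c p.1)⁻¹ * f (Y p ω)) with hZ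
  have hZL2 : ∀ p ∈ A, MemLp (Z p) 2 P := fun p hp =>
    ((hT.memLp_comp_of_map_eq_withDensity_indicator hφ (fun i => (hc i).le) hY hlaw hf
      hp).const_mul _).const_mul _
  have hindepZ : Set.Pairwise A fun p q => Z p ⟂ᵢ[P] Z q := fun p hp q hq hpq => by
    have hYpq : Y p ⟂ᵢ[P] Y q :=
      hindep.indepFun (i := ⟨p, hp⟩) (j := ⟨q, hq⟩) (by simpa using hpq)
    exact hYpq.comp ((hfmeas.const_mul _).const_mul _) ((hfmeas.const_mul _).const_mul _)
  have hvarZ : ∀ p ∈ A, Var[Z p; P] ≤ M ^ 2 * (2⁻¹ * (h ^ e * ∫ q, φ p.2 q.1 * φ p.2 q.2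
      * (|f q.1 - f q.2| ^ 2 / dist q.1 q.2 ^ e)
      ∂(μ.restrict (T p.1)).prod (μ.restrict (T p.1)))) := fun p hp => by
    have hμT :
        (μ.restrict (T p.1)).prod (μ.restrict (T p.1)) ≤ (μ.restrict D).prod (μ.restrict D) := by
      have := hT.subset p.1
      gcongr
    rw [hZ, variance_const_mul]
    exact mul_le_mul (sq_le_sq' (abs_le.1 (hM p.2)).1 (abs_le.1 (hM p.2)).2)
      (variance_inv_mul_comp_le_of_map_eq_withDensity_indicator (hY p).aemeasurable
        (hT.measurableSet p.1) (hdiam p.1) (hc p.1) (hφ.measurable p.2)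
        (fun x hx => hφ.nonneg p.2 x (hT.subset p.1 hx))
        (fun x hx => hφ.le_one p.2 x (hT.subset p.1 hx)) (hlaw p hp)
        (hf.mono_measure (Measure.restrict_mono (hT.subset p.1) le_rfl)) he
        (hK.mono_measure hμT))
      (variance_nonneg _ _) (sq_nonneg M)
  rw [← Finset.sum_fn, IndepFun.variance_sum hZL2 hindepZ]
  calc _ ≤ _ := Finset.sum_le_sum hvarZ
    _ = M ^ 2 * (2⁻¹ * (h ^ e * ∑ p ∈ A, ∫ q, φ p.2 q.1 * φ p.2 q.2
          * (|f q.1 - f q.2| ^ 2 / dist q.1 q.2 ^ e)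
          ∂(μ.restrict (T p.1)).prod (μ.restrict (T p.1)))) := by
        simp only [← Finset.mul_sum]
    _ ≤ _ := by
        gcongr
        exact hT.sum_integral_mul_mul_le_integral hφ A (fun q => by positivity) hK

end Estimator

theorem stmt_15_general
    {Ω : Type*} [MeasurableSpace Ω] (P : Measure Ω) [IsProbabilityMeasure P]
    (D : Set (EuclideanSpace ℝ (Fin 2))) (hDmeas : MeasurableSet D)
    (hDbdd : Bornology.IsBounded D)
    (h : ℝ) (hh0 : 0 < h)
    (N m : ℕ) (T : Fin N → Set (EuclideanSpace ℝ (Fin 2)))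
    (hTmeas : ∀ i, MeasurableSet (T i))
    (hTsub : ∀ i, T i ⊆ D)
    (hTdisj : Pairwise (Function.onFun Disjoint T))
    (hTpos : ∀ i, 0 < volume (T i))
    (hTfin : ∀ i, volume (T i) < ⊤)
    (hTdiam : ∀ i, ∀ x ∈ T i, ∀ z ∈ T i, dist x z ≤ h)
    (hcover : volume (D \ ⋃ i, T i) = 0)
    (φ : Fin m → EuclideanSpace ℝ (Fin 2) → ℝ)
    (hφmeas : ∀ j, Measurable (φ j))
    (hφnn : ∀ j, ∀ x ∈ D, 0 ≤ φ j x)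
    (hφle : ∀ j, ∀ x ∈ D, φ j x ≤ 1)
    (hφsum : ∀ x ∈ D, ∑ j, φ j x ≤ 1)
    (A : Finset (Fin N × Fin m))
    (hAc : ∀ p : Fin N × Fin m, p ∉ A →
      ∀ᵐ x ∂volume.restrict (T p.1), φ p.2 x = 0)
    (Y : Fin N × Fin m → Ω → EuclideanSpace ℝ (Fin 2))
    (hYmeas : ∀ p, Measurable (Y p))
    (hYlaw : ∀ p ∈ A, Measure.map (Y p) P = volume.withDensity
      (fun x => ENNReal.ofReal
        ((T p.1).indicator (fun x => 3 * (volume (T p.1)).toReal⁻¹ * φ p.2 x) x)))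
    (hYindep : iIndepFun
      (fun p : {p : Fin N × Fin m // p ∈ A} => Y p.1) P)
    (s : ℝ) (hs0 : 0 < s)
    (f : EuclideanSpace ℝ (Fin 2) → ℝ) (hfmeas : Measurable f)
    (hf : MemLp f 2 (volume.restrict D))
    (hsem : Integrable
      (fun p : EuclideanSpace ℝ (Fin 2) × EuclideanSpace ℝ (Fin 2) =>
        |f p.1 - f p.2| ^ 2 / dist p.1 p.2 ^ (2 + 2 * s))
      ((volume.restrict D).prod (volume.restrict D)))
    (vc : Fin m → ℝ) (M : ℝ) (hM : ∀ j, |vc j| ≤ M) :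
    ∫ ω, |(∫ x in D, f x * ∑ j, vc j * φ j x)
        - (1 / 3) * ∑ p ∈ A, (volume (T p.1)).toReal * vc p.2 * f (Y p ω)| ^ 2 ∂P
      ≤ h ^ (2 * (1 + s)) * M ^ 2
          * ∫ x in D, ∫ z in D, |f x - f z| ^ 2 / dist x z ^ (2 + 2 * s) := by
  have : IsFiniteMeasure (volume.restrict D) :=
    isFiniteMeasure_restrict.2 hDbdd.measure_lt_top.ne
  have hT : IsAEPartition volume D T := ⟨hTmeas, hTsub, hTdisj, hcover⟩
  have hφ : IsSubPartitionOfUnityOn D φ := ⟨hφmeas, hφnn, hφle, hφsum⟩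
  have hc : ∀ i, 0 < 3 * (volume (T i)).toReal⁻¹ := fun i => by
    have := ENNReal.toReal_pos (hTpos i).ne' (hTfin i).ne
    positivity
  have hestimator : ∀ ω, (1 / 3) * ∑ p ∈ A, (volume (T p.1)).toReal * vc p.2 * f (Y p ω)
      = ∑ p ∈ A, vc p.2 * ((3 * (volume (T p.1)).toReal⁻¹)⁻¹ * f (Y p ω)) := fun ω => by
    rw [Finset.mul_sum]
    refine Finset.sum_congr rfl fun p _ => ?_
    rw [mul_inv, inv_inv]
    ring
  have hJ : 0 ≤ ∫ q, |f q.1 - f q.2| ^ 2 / dist q.1 q.2 ^ (2 + 2 * s)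
      ∂(volume.restrict D).prod (volume.restrict D) := integral_nonneg fun q => by positivity
  have hhs : 0 ≤ h ^ (2 + 2 * s) * M ^ 2 := by positivity
  simp_rw [hestimator]
  rw [integral_sq_abs_sub_eq_variance (by fun_prop)
      (hT.integral_sum_inv_mul_comp_eq hDmeas hφ hAc hc hYmeas hYlaw hfmeas hf vc),
    integral_integral hsem, show 2 * (1 + s) = 2 + 2 * s by ring]
  refine (hT.variance_sum_inv_mul_comp_le hh0.le hTdiam hφ hc hYmeas hYlaw hYindep hfmeas hf
    (by positivity) hsem hM).trans ?_
  linarith [mul_nonneg hhs hJ]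

/-- Mean-square error bound for the importance sampling estimator of the load
functional with an integrand of fractional Sobolev regularity:
`E[|∫_D f v − (1/3) ∑_{(i,j)∈A} |T i| v_j f (Y (i,j))|²]
  ≤ h^{2(1+s)} M² |f|²_{W^{s,2}(D)}` where `v = ∑ j v_j φ_j` and
`max_j |v_j| ≤ M`. -/
theorem stmt_15
    {Ω : Type*} [MeasurableSpace Ω] (P : Measure Ω) [IsProbabilityMeasure P]
    (D : Set (EuclideanSpace ℝ (Fin 2))) (hDmeas : MeasurableSet D)
    (hDbdd : Bornology.IsBounded D)
    (h : ℝ) (hh0 : 0 < h) (hh1 : h ≤ 1)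
    (N m : ℕ) (T : Fin N → Set (EuclideanSpace ℝ (Fin 2)))
    (hTmeas : ∀ i, MeasurableSet (T i))
    (hTsub : ∀ i, T i ⊆ D)
    (hTdisj : Pairwise (Function.onFun Disjoint T))
    (hTpos : ∀ i, 0 < volume (T i))
    (hTfin : ∀ i, volume (T i) < ⊤)
    (hTdiam : ∀ i, ∀ x ∈ T i, ∀ z ∈ T i, dist x z ≤ h)
    (hcover : volume (D \ ⋃ i, T i) = 0)
    (φ : Fin m → EuclideanSpace ℝ (Fin 2) → ℝ)
    (hφmeas : ∀ j, Measurable (φ j))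
    (hφnn : ∀ j, ∀ x ∈ D, 0 ≤ φ j x)
    (hφle : ∀ j, ∀ x ∈ D, φ j x ≤ 1)
    (hφsum : ∀ x ∈ D, ∑ j, φ j x ≤ 1)
    (A : Finset (Fin N × Fin m))
    (hA : ∀ p ∈ A, ∫ x in T p.1, φ p.2 x = (volume (T p.1)).toReal / 3)
    (hAc : ∀ p : Fin N × Fin m, p ∉ A →
      ∀ᵐ x ∂volume.restrict (T p.1), φ p.2 x = 0)
    (Y : Fin N × Fin m → Ω → EuclideanSpace ℝ (Fin 2))
    (hYmeas : ∀ p, Measurable (Y p))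
    (hYlaw : ∀ p ∈ A, Measure.map (Y p) P = volume.withDensity
      (fun x => ENNReal.ofReal
        ((T p.1).indicator (fun x => 3 * (volume (T p.1)).toReal⁻¹ * φ p.2 x) x)))
    (hYindep : iIndepFun
      (fun p : {p : Fin N × Fin m // p ∈ A} => Y p.1) P)
    (s : ℝ) (hs0 : 0 < s) (hs1 : s < 1)
    (f : EuclideanSpace ℝ (Fin 2) → ℝ) (hfmeas : Measurable f)
    (hf : MemLp f 2 (volume.restrict D))
    (hsem : Integrable
      (fun p : EuclideanSpace ℝ (Fin 2) × EuclideanSpace ℝ (Fin 2) =>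
        |f p.1 - f p.2| ^ 2 / dist p.1 p.2 ^ (2 + 2 * s))
      ((volume.restrict D).prod (volume.restrict D)))
    (vc : Fin m → ℝ) (M : ℝ) (hM : ∀ j, |vc j| ≤ M) :
    ∫ ω, |(∫ x in D, f x * ∑ j, vc j * φ j x)
        - (1 / 3) * ∑ p ∈ A, (volume (T p.1)).toReal * vc p.2 * f (Y p ω)| ^ 2 ∂P
      ≤ h ^ (2 * (1 + s)) * M ^ 2
          * ∫ x in D, ∫ z in D, |f x - f z| ^ 2 / dist x z ^ (2 + 2 * s) :=
  stmt_15_general P D hDmeas hDbdd h hh0 N m T hTmeas hTsub hTdisj hTpos hTfin hTdiam hcover φ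
    hφmeas hφnn hφle hφsum A hAc Y hYmeas hYlaw hYindep s hs0 f hfmeas hf hsem vc M hM
end
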